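/- Let z ∈ A^Γ be a proper landscape and x' an element of totally finite height in the orbit closure of z. Then K_{x'} ⊇ K_z, J_{x'} ⊇ J_z, and I_{x'} ⊆ I_z, where for an element x, K_x is the set of labeled balls B (of radius m) never realized as Θ^m_x(γ), J_x is the set of labeled balls B realized within uniformly bounded distance K_B of every height-1 point of x, and I_x is the complement of K_x ∪ J_x in the set of all labeled balls. -/

import Mathlib

open scoped Pointwise

/-- Word metric of the (right) Cayley graph `Cay(Γ, S)` (right-invariant). -/
noncomputable def wordDist {Γ : Type*} [Group Γ] (S : Set Γ) (γ δ : Γ) : ℕ :=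
  sInf {n | ∃ l : List Γ, (∀ s ∈ l, s ∈ S) ∧ l.length = n ∧ l.prod * γ = δ}

/-- `A = {0,1}^ℕ × (ℕ ∪ {∞})`, with `ℕ ∪ {∞}` the one-point compactification of `ℕ`. -/
abbrev CantorHeightSpace : Type := (ℕ → Bool) × OnePoint ℕ

/-- The translation action `L_γ(x)(δ) = x(δγ)` on `A^Γ`. -/
def Lact {Γ : Type*} [Group Γ] (γ : Γ) (x : Γ → CantorHeightSpace) : Γ → CantorHeightSpace :=
  fun δ => x (δ * γ)

/-- Orbit closure in the product topology on `A^Γ`. -/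
def orbitClosure {Γ : Type*} [Group Γ] (y : Γ → CantorHeightSpace) :
    Set (Γ → CantorHeightSpace) :=
  closure {x | ∃ γ : Γ, x = Lact γ y}

/-- An element of `A^Γ` is of totally finite height if no height coordinate is `∞`. -/
def TotallyFinite {Γ : Type*} [Group Γ] (x : Γ → CantorHeightSpace) : Prop :=
  ∀ γ : Γ, (x γ).2 ≠ OnePoint.infty

/-- The labeled ball (window) `Θ^m_x(γ)`: it records, for each `δ` in the ball of radius `m`
around the identity, the `m`-truncated Cantor coordinate and the height of `x` at `δγ`. -/
def window {Γ : Type*} [Group Γ] (d : Γ → Γ → ℕ) (m : ℕ) (x : Γ → CantorHeightSpace)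
    (γ : Γ) : Γ → Option CantorHeightSpace := fun δ =>
  if d 1 δ ≤ m then
    some (fun i => if i < m then (x (δ * γ)).1 i else false, (x (δ * γ)).2)
  else none

/-- The `z`-local set `(Θ^m_z)^{-1}(S)` determined by a set `S` of labeled balls. -/
def localSet {Γ : Type*} [Group Γ] (d : Γ → Γ → ℕ) (m : ℕ) (z : Γ → CantorHeightSpace)
    (S : Set (Γ → Option CantorHeightSpace)) : Set Γ :=
  {γ | window d m z γ ∈ S}

/-- A proper Cantor labeling. -/
def IsProperCantorLabeling {Γ : Type*} [Group Γ] (d : Γ → Γ → ℕ) (lab : Γ → ℕ → Bool) :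
    Prop :=
  ∀ r : ℕ, 0 < r → ∃ Sr : ℕ, 0 < Sr ∧ ∀ γ δ : Γ, 0 < d γ δ → d γ δ ≤ r →
    ∃ i < Sr, lab γ i ≠ lab δ i

/-- The four landscape conditions for an element of totally finite height. -/
def IsLandscape {Γ : Type*} [Group Γ] (d : Γ → Γ → ℕ) (z : Γ → CantorHeightSpace) : Prop :=
  TotallyFinite z ∧
  (∀ γ δ : Γ, ∀ a b : ℕ, d γ δ = 1 → (z γ).2 = (a : OnePoint ℕ) →
    (z δ).2 = (b : OnePoint ℕ) → |(a : ℤ) - (b : ℤ)| ≤ 1) ∧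
  (∀ n : ℕ, 1 ≤ n → ∃ M : ℕ, 1 < M ∧ ∀ γ : Γ, (z γ).2 = (n : OnePoint ℕ) →
    ∃ δ : Γ, d δ γ ≤ M ∧ (z δ).2 = ((1 : ℕ) : OnePoint ℕ)) ∧
  (∀ l : ℕ, 1 ≤ l → ∃ N : ℕ, 1 < N ∧ ∀ γ : Γ, (z γ).2 = ((1 : ℕ) : OnePoint ℕ) →
    l ≤ {δ : Γ | d γ δ ≤ N ∧ (z δ).2 = ((1 : ℕ) : OnePoint ℕ)}.ncard) ∧
  (∀ m : ℕ, 1 ≤ m → ∃ Sm : ℕ, 1 < Sm ∧ ∀ δ : Γ, ∃ κ : Γ, d δ κ ≤ Sm ∧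
    ∃ h : ℕ, m ≤ h ∧ (z κ).2 = (h : OnePoint ℕ))

/-- A proper landscape: a landscape whose Cantor coordinates form a proper Cantor
labeling. -/
def IsProperLandscape {Γ : Type*} [Group Γ] (d : Γ → Γ → ℕ) (z : Γ → CantorHeightSpace) :
    Prop :=
  IsLandscape d z ∧ IsProperCantorLabeling d (fun γ => (z γ).1)

/-- `K_x`: the labeled balls (of radius `B.1`) never realized as a window of `x`. -/
def Kset {Γ : Type*} [Group Γ] (d : Γ → Γ → ℕ) (x : Γ → CantorHeightSpace) :
    Set (ℕ × (Γ → Option CantorHeightSpace)) :=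
  {B | ∀ γ : Γ, window d B.1 x γ ≠ B.2}

/-- `J_x`: the labeled balls realized within a uniformly bounded distance of every
height-one point of `x`. -/
def Jset {Γ : Type*} [Group Γ] (d : Γ → Γ → ℕ) (x : Γ → CantorHeightSpace) :
    Set (ℕ × (Γ → Option CantorHeightSpace)) :=
  {B | ∃ KB : ℕ, ∀ γ : Γ, (x γ).2 = ((1 : ℕ) : OnePoint ℕ) →
    ∃ δ : Γ, d δ γ ≤ KB ∧ window d B.1 x δ = B.2}

/-- `I_x = ℬ \ (K_x ∪ J_x)`. -/
def Iset {Γ : Type*} [Group Γ] (d : Γ → Γ → ℕ) (x : Γ → CantorHeightSpace) :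
    Set (ℕ × (Γ → Option CantorHeightSpace)) :=
  (Kset d x ∪ Jset d x)ᶜ

/-!
Over a finite symmetric generating set, word-metric balls are finite, so a window of radius `m`
reads finitely many coordinates, each through `m` Cantor digits and a height. Finite heights are
isolated in `ℕ ∪ {∞}`, hence every window of `x'` (and its height at any point) is locally
constant near `x'`, and that neighbourhood contains a translate of `z`. So each window of `x'` is
a window of `z`; and near a height-one point `γ` of `x'` the translate sees a height-one point
of `z` whose nearby `J`-pattern transports back to a pattern of `x'` within the same distance.
-/

section WordMetric

variable {Γ : Type*} [Group Γ]

lemma wordDist_mul_right (S : Set Γ) (γ δ η : Γ) :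
    wordDist S (γ * η) (δ * η) = wordDist S γ δ := by
  unfold wordDist
  congr 1
  ext n
  refine exists_congr fun l => and_congr_right fun _ => and_congr_right fun _ => ?_
  rw [← mul_assoc, mul_left_inj]

lemma exists_list_prod_eq {S : Set Γ} (hSsym : ∀ s ∈ S, s⁻¹ ∈ S)
    (hSgen : Subgroup.closure S = ⊤) (δ : Γ) :
    ∃ l : List Γ, (∀ s ∈ l, s ∈ S) ∧ l.prod = δ := by
  have hS : S ∪ S⁻¹ = S := Set.union_eq_left.2 fun s hs => by simpa using hSsym _ hs
  apply Submonoid.exists_list_of_mem_closure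
  rw [← hS, ← Subgroup.closure_toSubmonoid, hSgen]
  trivial

lemma exists_list_length_eq_wordDist {S : Set Γ} (hSsym : ∀ s ∈ S, s⁻¹ ∈ S)
    (hSgen : Subgroup.closure S = ⊤) (γ δ : Γ) :
    ∃ l : List Γ, (∀ s ∈ l, s ∈ S) ∧ l.length = wordDist S γ δ ∧ l.prod * γ = δ := by
  obtain ⟨l, hl, hprod⟩ := exists_list_prod_eq hSsym hSgen (δ * γ⁻¹)
  have hne : {n | ∃ l : List Γ, (∀ s ∈ l, s ∈ S) ∧ l.length = n ∧ l.prod * γ = δ}.Nonempty :=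
    ⟨_, l, hl, rfl, by rw [hprod, inv_mul_cancel_right]⟩
  exact Nat.sInf_mem hne

lemma finite_setOf_wordDist_one_le {S : Set Γ} (hSfin : S.Finite)
    (hSsym : ∀ s ∈ S, s⁻¹ ∈ S) (hSgen : Subgroup.closure S = ⊤) (r : ℕ) :
    {δ : Γ | wordDist S 1 δ ≤ r}.Finite := by
  have : Finite S := hSfin.to_subtype
  refine ((List.finite_length_le S r).image fun l => (l.map (↑)).prod).subset fun δ hδ => ?_
  obtain ⟨l, hl, hlen, hprod⟩ := exists_list_length_eq_wordDist hSsym hSgen 1 δ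
  lift l to List S using hl
  refine ⟨l, ?_, by simpa using hprod⟩
  rw [Set.mem_ofPred_eq, ← List.length_map (f := Subtype.val), hlen]
  exact hδ

end WordMetric

section Windows

variable {Γ : Type*} [Group Γ] (d : Γ → Γ → ℕ) (m : ℕ)

lemma window_Lact (γ₀ γ : Γ) (z : Γ → CantorHeightSpace) :
    window d m (Lact γ₀ z) γ = window d m z (γ * γ₀) := by
  funext δ
  simp only [window, Lact, mul_assoc]

lemma window_congr {x y : Γ → CantorHeightSpace} {γ : Γ}
    (h : ∀ δ : Γ, d 1 δ ≤ m →
      (∀ i < m, (x (δ * γ)).1 i = (y (δ * γ)).1 i) ∧ (x (δ * γ)).2 = (y (δ * γ)).2) :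
    window d m x γ = window d m y γ := by
  funext δ
  unfold window
  split_ifs with hδ
  · obtain ⟨hlab, hheight⟩ := h δ hδ
    refine congrArg some (Prod.ext (funext fun i => ?_) hheight)
    dsimp only
    split_ifs with hi
    · exact hlab i hi
    · rfl
  · rfl

end Windows

open Filter Topology

section Cylinders

variable {ι : Type*}

lemma eventually_label_eq (x : ι → CantorHeightSpace) (γ : ι) (m : ℕ) :
    ∀ᶠ y in 𝓝 x, ∀ i < m, (y γ).1 i = (x γ).1 i := by
  refine (eventually_all_finite (Set.finite_lt_nat m)).2 fun i _ => ?_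
  have hc : Continuous fun y : ι → CantorHeightSpace => (y γ).1 i := by fun_prop
  exact hc.continuousAt.preimage_mem_nhds ((isOpen_discrete {(x γ).1 i}).mem_nhds rfl)

lemma eventually_height_eq {x : ι → CantorHeightSpace} {γ : ι} (hx : (x γ).2 ≠ OnePoint.infty) :
    ∀ᶠ y in 𝓝 x, (y γ).2 = (x γ).2 := by
  obtain ⟨n, hn⟩ := OnePoint.ne_infty_iff_exists.1 hx
  have hopen : IsOpen {(x γ).2} := by
    rw [← hn, ← Set.image_singleton]
    exact OnePoint.isOpen_image_coe.2 (isOpen_discrete _)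
  have hc : Continuous fun y : ι → CantorHeightSpace => (y γ).2 := by fun_prop
  exact hc.continuousAt.preimage_mem_nhds (hopen.mem_nhds rfl)

end Cylinders

section OrbitClosure

variable {Γ : Type*} [Group Γ]

lemma eventually_window_eq {d : Γ → Γ → ℕ} {m : ℕ} (hball : {δ : Γ | d 1 δ ≤ m}.Finite)
    {x : Γ → CantorHeightSpace} (hx : TotallyFinite x) (γ : Γ) :
    ∀ᶠ y in 𝓝 x, window d m y γ = window d m x γ := by
  filter_upwards [(eventually_all_finite hball).2 fun δ _ =>
    (eventually_label_eq x (δ * γ) m).and (eventually_height_eq (hx (δ * γ)))] with y hy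
  exact window_congr d m hy

lemma exists_Lact_of_mem_orbitClosure {z x : Γ → CantorHeightSpace} (hx : x ∈ orbitClosure z)
    {P : (Γ → CantorHeightSpace) → Prop} (hP : ∀ᶠ y in 𝓝 x, P y) : ∃ γ₀, P (Lact γ₀ z) := by
  obtain ⟨_, hy, γ₀, rfl⟩ := mem_closure_iff_nhds.1 hx _ hP
  exact ⟨γ₀, hy⟩

variable {d : Γ → Γ → ℕ} {z x : Γ → CantorHeightSpace}

lemma Kset_subset_Kset_of_mem_orbitClosure (hball : ∀ m, {δ : Γ | d 1 δ ≤ m}.Finite)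
    (hx : x ∈ orbitClosure z) (hxfin : TotallyFinite x) : Kset d z ⊆ Kset d x := by
  rintro ⟨m, W⟩ hW γ hγ
  obtain ⟨γ₀, hγ₀⟩ := exists_Lact_of_mem_orbitClosure hx (eventually_window_eq (hball m) hxfin γ)
  exact hW (γ * γ₀) (by rw [← window_Lact, hγ₀, hγ])

lemma Jset_subset_Jset_of_mem_orbitClosure (hinv : ∀ γ δ η, d (γ * η) (δ * η) = d γ δ)
    (hball : ∀ m, {δ : Γ | d 1 δ ≤ m}.Finite)
    (hx : x ∈ orbitClosure z) (hxfin : TotallyFinite x) : Jset d z ⊆ Jset d x := by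
  rintro ⟨m, W⟩ ⟨K, hK⟩
  refine ⟨K, fun γ hγ => ?_⟩
  have hballγ : {δ | d δ γ ≤ K}.Finite := by
    refine ((hball K).image fun ε => ε⁻¹ * γ).subset fun δ hδ => ⟨γ * δ⁻¹, ?_, by group⟩
    simpa [← hinv δ γ δ⁻¹] using hδ
  obtain ⟨γ₀, hheight, hwindows⟩ := exists_Lact_of_mem_orbitClosure hx
    ((eventually_height_eq (hxfin γ)).and
      ((eventually_all_finite hballγ).2 fun δ _ => eventually_window_eq (hball m) hxfin δ))
  obtain ⟨δ, hδ, hWδ⟩ := hK (γ * γ₀) (by rw [← hγ, ← hheight]; rfl)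
  have hdist : d (δ * γ₀⁻¹) γ ≤ K := by rwa [← hinv _ _ γ₀, inv_mul_cancel_right]
  refine ⟨δ * γ₀⁻¹, hdist, ?_⟩
  rw [← hwindows _ hdist, window_Lact, inv_mul_cancel_right, hWδ]

end OrbitClosure

theorem stmt14_general {Γ : Type*} [Group Γ] (S : Set Γ)
    (hSfin : S.Finite) (hSsym : ∀ s ∈ S, s⁻¹ ∈ S) (hSgen : Subgroup.closure S = ⊤)
    (z x' : Γ → CantorHeightSpace)
    (hx' : x' ∈ orbitClosure z) (hx'fin : TotallyFinite x') :
    Kset (wordDist S) z ⊆ Kset (wordDist S) x' ∧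
    Jset (wordDist S) z ⊆ Jset (wordDist S) x' ∧
    Iset (wordDist S) x' ⊆ Iset (wordDist S) z := by
  have hball := finite_setOf_wordDist_one_le hSfin hSsym hSgen
  have hK := Kset_subset_Kset_of_mem_orbitClosure hball hx' hx'fin
  have hJ := Jset_subset_Jset_of_mem_orbitClosure (wordDist_mul_right S) hball hx' hx'fin
  exact ⟨hK, hJ, Set.compl_subset_compl.2 (Set.union_subset_union hK hJ)⟩

/-- if `z` is a proper landscape and `x'` is an element of totally finite
height in the orbit closure of `z`, then `K_z ⊆ K_{x'}`, `J_z ⊆ J_{x'}` and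
`I_{x'} ⊆ I_z`. -/
theorem stmt14 {Γ : Type*} [Group Γ] (S : Set Γ)
    (hSfin : S.Finite) (hSsym : ∀ s ∈ S, s⁻¹ ∈ S) (hSgen : Subgroup.closure S = ⊤)
    (z x' : Γ → CantorHeightSpace)
    (hz : IsProperLandscape (wordDist S) z)
    (hx' : x' ∈ orbitClosure z) (hx'fin : TotallyFinite x') :
    Kset (wordDist S) z ⊆ Kset (wordDist S) x' ∧
    Jset (wordDist S) z ⊆ Jset (wordDist S) x' ∧
    Iset (wordDist S) x' ⊆ Iset (wordDist S) z :=
  stmt14_general S hSfin hSsym hSgen z x' hx' hx'fin
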